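/- Let T be a strong Poset-monad such that every morphism f : X → T Y is lax thunkable (T η_Y ∘ f ≤ η_{T Y} ∘ f). Then every such f is lax discardable (T !_Y ∘ f ≤ η_1 ∘ !_X, where ! denotes the unique map to the terminal object) and lax copyable (T⟨id,id⟩ ∘ f ≤ seq_{Y,Y} ∘ ⟨f, f⟩). -/

import Mathlib

/-!
If `k : T Y ⟶ T Z` satisfies `η_Y ≫ k = h ≫ η_Z`, then `T h = T η_Y ≫ k♯`, where `k♯` is the
Kleisli extension of `k`. Lax thunkability of `f` therefore gives
`f ≫ T h ≤ f ≫ η_{T Y} ≫ k♯ = f ≫ k`. Discardability is the case `h = !_Y`, `k = ! ≫ η_1`;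
copyability is the case `h = ⟨id, id⟩`, `k = ⟨id, id⟩ ≫ seq`, since `(η × η) ≫ seq = η`.
-/

open CategoryTheory CategoryTheory.Limits

/-- Functorial action of a strong monad given by its Kleisli extension. -/
noncomputable def Tmap {C : Type*} [Category C] [HasTerminal C] [HasBinaryProducts C]
    (T : C → C) (η : ∀ X : C, X ⟶ T X)
    (ext : ∀ {W X Y : C}, (W ⨯ X ⟶ T Y) → (W ⨯ T X ⟶ T Y))
    {X Y : C} (f : X ⟶ Y) : T X ⟶ T Y :=
  (prod.leftUnitor (T X)).inv ≫ ext (prod.snd ≫ f ≫ η Y)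

/-- Left-to-right sequencing `seq : T X₁ ⨯ T X₂ ⟶ T (X₁ ⨯ X₂)` derived from
the strength (evaluate the left component first, then the right). -/
noncomputable def seqq {C : Type*} [Category C] [HasTerminal C] [HasBinaryProducts C]
    (T : C → C) (η : ∀ X : C, X ⟶ T X)
    (ext : ∀ {W X Y : C}, (W ⨯ X ⟶ T Y) → (W ⨯ T X ⟶ T Y))
    (X₁ X₂ : C) : T X₁ ⨯ T X₂ ⟶ T (X₁ ⨯ X₂) :=
  (prod.braiding (T X₁) (T X₂)).hom ≫
    ext ((prod.braiding (T X₂) X₁).hom ≫ ext (η (X₁ ⨯ X₂)))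

section KleisliExtension

variable {C : Type*} [Category C] [HasTerminal C] [HasBinaryProducts C]
  (T : C → C) (η : ∀ X : C, X ⟶ T X)
  (ext : ∀ {W X Y : C}, (W ⨯ X ⟶ T Y) → (W ⨯ T X ⟶ T Y))

noncomputable def kleisliExt {A B : C} (h : A ⟶ T B) : T A ⟶ T B :=
  (prod.leftUnitor (T A)).inv ≫ ext (prod.snd ≫ h)

structure StrongKleisliLaws : Prop where
  unit_comp_ext : ∀ {W X Y : C} (f : W ⨯ X ⟶ T Y), prod.map (𝟙 W) (η X) ≫ ext f = f
  ext_snd_unit : ∀ X : C, ext (prod.snd ≫ η X) = (prod.snd : (⊤_ C) ⨯ T X ⟶ T X)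
  ext_assoc : ∀ {W' W X Y Z : C} (f : W ⨯ X ⟶ T Y) (g : W' ⨯ Y ⟶ T Z),
    ext ((prod.associator W' W X).hom ≫ prod.map (𝟙 W') f ≫ ext g)
      = (prod.associator W' W (T X)).hom ≫ prod.map (𝟙 W') (ext f) ≫ ext g

theorem Tmap_eq_kleisliExt {X Y : C} (h : X ⟶ Y) :
    Tmap T η ext h = kleisliExt T ext (h ≫ η Y) :=
  rfl

theorem snd_comp_kleisliExt {A B : C} (h : A ⟶ T B) :
    (prod.snd : (⊤_ C) ⨯ T A ⟶ T A) ≫ kleisliExt T ext h = ext (prod.snd ≫ h) := by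
  rw [kleisliExt, ← prod.leftUnitor_hom, Iso.hom_inv_id_assoc]

theorem eta_comp_kleisliExt
    (unit_comp_ext : ∀ {W X Y : C} (f : W ⨯ X ⟶ T Y), prod.map (𝟙 W) (η X) ≫ ext f = f)
    {A B : C} (h : A ⟶ T B) : η A ≫ kleisliExt T ext h = h := by
  rw [kleisliExt, ← Category.assoc, ← prod.leftUnitor_inv_naturality, Category.assoc,
    unit_comp_ext, ← prod.leftUnitor_hom, Iso.inv_hom_id_assoc]

theorem ext_prodMap_fst (hT : StrongKleisliLaws T η ext) {W X Z : C} (G : W ⨯ X ⟶ T Z) :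
    ext (prod.map (prod.fst : W ⨯ (⊤_ C) ⟶ W) (𝟙 X) ≫ G)
      = prod.map prod.fst (𝟙 (T X)) ≫ ext G := by
  have h := hT.ext_assoc ((prod.snd : (⊤_ C) ⨯ X ⟶ X) ≫ η X) G
  rw [hT.ext_snd_unit] at h
  have hX : (prod.associator W (⊤_ C) X).hom ≫ prod.map (𝟙 W) (prod.snd ≫ η X)
      = prod.map prod.fst (𝟙 X) ≫ prod.map (𝟙 W) (η X) := by
    apply prod.hom_ext <;> simp [prod.lift_snd_assoc]
  have hTX : (prod.associator W (⊤_ C) (T X)).hom ≫ prod.map (𝟙 W) prod.snd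
      = prod.map prod.fst (𝟙 (T X)) := by
    apply prod.hom_ext <;> simp [prod.lift_fst, prod.lift_snd]
  rwa [reassoc_of% hX, hT.unit_comp_ext, reassoc_of% hTX] at h

theorem kleisliExt_comp_kleisliExt (hT : StrongKleisliLaws T η ext) {A B D : C}
    (g : A ⟶ T B) (h : B ⟶ T D) :
    kleisliExt T ext g ≫ kleisliExt T ext h = kleisliExt T ext (g ≫ kleisliExt T ext h) := by
  -- associativity with both parameters terminal; `ext_prodMap_fst` then drops the extra one
  have key := hT.ext_assoc ((prod.snd : (⊤_ C) ⨯ A ⟶ A) ≫ g) ((prod.snd : (⊤_ C) ⨯ B ⟶ B) ≫ h)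
  rw [← snd_comp_kleisliExt T ext h, ← snd_comp_kleisliExt T ext g] at key
  have hL : (prod.associator (⊤_ C) (⊤_ C) A).hom ≫ prod.map (𝟙 (⊤_ C)) (prod.snd ≫ g)
        ≫ prod.snd ≫ kleisliExt T ext h
      = prod.map prod.fst (𝟙 A) ≫ prod.snd ≫ g ≫ kleisliExt T ext h := by
    simp [prod.lift_snd_assoc]
  have hR : (prod.associator (⊤_ C) (⊤_ C) (T A)).hom
        ≫ prod.map (𝟙 (⊤_ C)) (prod.snd ≫ kleisliExt T ext g) ≫ prod.snd ≫ kleisliExt T ext h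
      = prod.snd ≫ kleisliExt T ext g ≫ kleisliExt T ext h := by
    simp [prod.lift_snd_assoc]
  rw [hL, hR, ext_prodMap_fst T η ext hT,
    ← snd_comp_kleisliExt T ext (g ≫ kleisliExt T ext h), prod.map_snd_assoc] at key
  obtain ⟨σ, hσ⟩ : ∃ σ : T A ⟶ ((⊤_ C) ⨯ (⊤_ C)) ⨯ T A, σ ≫ prod.snd = 𝟙 _ :=
    ⟨prod.lift (prod.lift (terminal.from _) (terminal.from _)) (𝟙 _), prod.lift_snd _ _⟩
  simpa only [reassoc_of% hσ, Category.id_comp] using σ ≫= key.symm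

theorem Tmap_comp_kleisliExt (hT : StrongKleisliLaws T η ext) {X Y Z : C}
    (h : X ⟶ Y) (k : Y ⟶ T Z) :
    Tmap T η ext h ≫ kleisliExt T ext k = kleisliExt T ext (h ≫ k) := by
  rw [Tmap_eq_kleisliExt, kleisliExt_comp_kleisliExt T η ext hT, Category.assoc,
    eta_comp_kleisliExt T η ext hT.unit_comp_ext]

theorem prodMap_eta_comp_seqq
    (unit_comp_ext : ∀ {W X Y : C} (f : W ⨯ X ⟶ T Y), prod.map (𝟙 W) (η X) ≫ ext f = f)
    (X₁ X₂ : C) : prod.map (η X₁) (η X₂) ≫ seqq T η ext X₁ X₂ = η (X₁ ⨯ X₂) := by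
  have split : prod.map (η X₂) (η X₁)
      = prod.map (η X₂) (𝟙 X₁) ≫ prod.map (𝟙 (T X₂)) (η X₁) := by
    simp
  rw [seqq, braid_natural_assoc, split, Category.assoc, unit_comp_ext, braid_natural_assoc,
    unit_comp_ext, prod.symmetry_assoc]

theorem comp_Tmap_le_of_thunkable [∀ X Y : C, LE (X ⟶ Y)]
    (comp_mono_left : ∀ {X Y Z : C} {f f' : X ⟶ Y} (g : Y ⟶ Z), f ≤ f' → f ≫ g ≤ f' ≫ g)
    (hT : StrongKleisliLaws T η ext)
    {X Y Z : C} {f : X ⟶ T Y} (hf : f ≫ Tmap T η ext (η Y) ≤ f ≫ η (T Y))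
    (h : Y ⟶ Z) (k : T Y ⟶ T Z) (hk : η Y ≫ k = h ≫ η Z) :
    f ≫ Tmap T η ext h ≤ f ≫ k :=
  calc f ≫ Tmap T η ext h = (f ≫ Tmap T η ext (η Y)) ≫ kleisliExt T ext k := by
        rw [Category.assoc, Tmap_comp_kleisliExt T η ext hT, hk, Tmap_eq_kleisliExt]
    _ ≤ (f ≫ η (T Y)) ≫ kleisliExt T ext k := comp_mono_left _ hf
    _ = f ≫ k := by rw [Category.assoc, eta_comp_kleisliExt T η ext hT.unit_comp_ext]

end KleisliExtension

/-- If every Kleisli morphism of a strong `Poset`-monad is lax thunkable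
(`T η_Y ∘ f ≤ η_{T Y} ∘ f`), then every morphism `f : X ⟶ T Y` is lax
discardable (`T !_Y ∘ f ≤ η_1 ∘ !_X`) and lax copyable
(`T ⟨id,id⟩ ∘ f ≤ seq_{Y,Y} ∘ ⟨f, f⟩`). -/
theorem stmt_14 {C : Type*} [Category C] [∀ X Y : C, PartialOrder (X ⟶ Y)]
    [HasTerminal C] [HasBinaryProducts C]
    (compMono : ∀ {X Y Z : C} (f f' : X ⟶ Y) (g g' : Y ⟶ Z),
      f ≤ f' → g ≤ g' → f ≫ g ≤ f' ≫ g')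
    (pairMono : ∀ {W X₁ X₂ : C} (f f' : W ⟶ X₁) (g g' : W ⟶ X₂),
      f ≤ f' → g ≤ g' → prod.lift f g ≤ prod.lift f' g')
    (T : C → C) (η : ∀ X : C, X ⟶ T X)
    (ext : ∀ {W X Y : C}, (W ⨯ X ⟶ T Y) → (W ⨯ T X ⟶ T Y))
    (extMono : ∀ {W X Y : C} (f f' : W ⨯ X ⟶ T Y), f ≤ f' → ext f ≤ ext f')
    (law1 : ∀ {W X Y : C} (f : W ⨯ X ⟶ T Y),
      prod.map (𝟙 W) (η X) ≫ ext f = f)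
    (law2 : ∀ X : C,
      ext (prod.snd ≫ η X) = (prod.snd : (⊤_ C) ⨯ T X ⟶ T X))
    (law3 : ∀ {W' W X Y Z : C} (f : W ⨯ X ⟶ T Y) (g : W' ⨯ Y ⟶ T Z),
      ext ((prod.associator W' W X).hom ≫ prod.map (𝟙 W') f ≫ ext g)
        = (prod.associator W' W (T X)).hom ≫ prod.map (𝟙 W') (ext f) ≫ ext g)
    -- every morphism into a free algebra is lax thunkable
    (thunkable : ∀ {X Y : C} (f : X ⟶ T Y),
      f ≫ Tmap T η (fun {W X Y} => ext) (η Y) ≤ f ≫ η (T Y)) :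
    -- lax discardable
    (∀ (X Y : C) (f : X ⟶ T Y),
      f ≫ Tmap T η (fun {W X Y} => ext) (terminal.from Y)
        ≤ terminal.from X ≫ η (⊤_ C)) ∧
    -- lax copyable
    (∀ (X Y : C) (f : X ⟶ T Y),
      f ≫ Tmap T η (fun {W X Y} => ext) (prod.lift (𝟙 Y) (𝟙 Y))
        ≤ prod.lift f f ≫ seqq T η (fun {W X Y} => ext) Y Y) := by
  have key {X Y Z : C} (f : X ⟶ T Y) :=
    comp_Tmap_le_of_thunkable T η ext (fun g hf => compMono _ _ g g hf le_rfl)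
      ⟨law1, law2, law3⟩ (Z := Z) (thunkable f)
  refine ⟨fun X Y f => ?_, fun X Y f => ?_⟩
  · calc f ≫ Tmap T η ext (terminal.from Y) ≤ f ≫ terminal.from (T Y) ≫ η (⊤_ C) :=
          key f _ _ (by rw [← Category.assoc, terminal.comp_from])
      _ = terminal.from X ≫ η (⊤_ C) := by rw [← Category.assoc, terminal.comp_from]
  · calc f ≫ Tmap T η ext (prod.lift (𝟙 Y) (𝟙 Y))
          ≤ f ≫ prod.lift (𝟙 (T Y)) (𝟙 (T Y)) ≫ seqq T η ext Y Y :=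
          key f _ _ (by simp [← prodMap_eta_comp_seqq T η ext law1, prod.comp_lift_assoc])
      _ = prod.lift f f ≫ seqq T η ext Y Y := by simp [prod.comp_lift_assoc]
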